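/- If p = [a_p, b_p] is a non-leaf node of D^k_A and q is a parent of p in D^k_A, then 1 ≤ |Top-k(q) \ Top-k(p)| ≤ 2, and every position in Top-k(q) \ Top-k(p) lies in column a_p − 1 or column b_p + 1. -/

import Mathlib

/-- `InRange a b p` : `p` is a position of a 2-row array lying in columns `a..b`. -/
def InRange (a b : ℕ) (p : ℕ × ℕ) : Prop :=
  (p.1 = 1 ∨ p.1 = 2) ∧ a ≤ p.2 ∧ p.2 ≤ b

/-- The set of positions of the `min(k, 2(b-a+1))` largest values of `A` restricted to
columns `a..b`: those positions in range dominated by fewer than `k` in-range values. -/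
def TopkSet (A : ℕ → ℕ → ℝ) (k a b : ℕ) : Set (ℕ × ℕ) :=
  {p | InRange a b p ∧ {q | InRange a b q ∧ A p.1 p.2 < A q.1 q.2}.ncard < k}

/-- The leftmost column among the answers of the Top-k query on columns `a..b`. -/
noncomputable def leftCol (A : ℕ → ℕ → ℝ) (k a b : ℕ) : ℕ :=
  sInf {c | ∃ r, (r, c) ∈ TopkSet A k a b}

/-- The rightmost column among the answers of the Top-k query on columns `a..b`. -/
noncomputable def rightCol (A : ℕ → ℕ → ℝ) (k a b : ℕ) : ℕ :=
  sSup {c | ∃ r, (r, c) ∈ TopkSet A k a b}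

/-- `IsChild A k q p` : `q` is a non-leaf node (interval) and `p` is its left or right
child in the DAG `D^k_A`. -/
def IsChild (A : ℕ → ℕ → ℝ) (k : ℕ) (q p : ℕ × ℕ) : Prop :=
  k < 2 * (q.2 - q.1 + 1) ∧
    ((p = (q.1, rightCol A k q.1 q.2 - 1) ∧ q.1 < rightCol A k q.1 q.2) ∨
     (p = (leftCol A k q.1 q.2 + 1, q.2) ∧ leftCol A k q.1 q.2 < q.2))

/-- The nodes of the DAG `D^k_A` on a `2 × n` array: the root is `[1, n]`, and the
children of a non-leaf node are as prescribed by `IsChild`. -/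
inductive IsNode (A : ℕ → ℕ → ℝ) (k n : ℕ) : ℕ × ℕ → Prop
  | root : IsNode A k n (1, n)
  | child {q p : ℕ × ℕ} : IsNode A k n q → IsChild A k q p → IsNode A k n p

/-- `p` is a descendant of `q` in the DAG `D^k_A`. -/
def Descendant (A : ℕ → ℕ → ℝ) (k : ℕ) (p q : ℕ × ℕ) : Prop :=
  Relation.TransGen (fun x y => IsChild A k y x) p q

/-- All entries of the `2 × n` array `A` are pairwise distinct. -/
def DistinctEntries (A : ℕ → ℕ → ℝ) (n : ℕ) : Prop :=
  Set.InjOn (fun p : ℕ × ℕ => A p.1 p.2) {p | InRange 1 n p}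

/-!
A child drops one extreme column of its parent's Top-k answer: the rightmost answer column
for a left child, the leftmost one for a right child. Top-k answers survive shrinking the
interval, since a position outranked by fewer than `k` values in `[a, b]` is outranked by even
fewer in a subinterval containing it. Hence `Top-k(q) \ Top-k(p)` is exactly the set of answers
of `q` in the dropped column: nonempty because that column is attained, and of size at most
two because the array has two rows.
-/

section TopkSet

variable {A : ℕ → ℕ → ℝ} {k a b : ℕ}

lemma setOf_inRange_finite (a b : ℕ) : {p : ℕ × ℕ | InRange a b p}.Finite :=
  (Set.finite_Icc (1, a) (2, b)).subset fun _ ⟨hr, hc1, hc2⟩ =>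
    ⟨Prod.le_def.2 ⟨by omega, hc1⟩, Prod.le_def.2 ⟨by omega, hc2⟩⟩

lemma topkSet_finite (A : ℕ → ℕ → ℝ) (k a b : ℕ) : (TopkSet A k a b).Finite :=
  (setOf_inRange_finite a b).subset fun _ hx => hx.1

lemma topkSet_nonempty (hk : 1 ≤ k) (hab : a ≤ b) : (TopkSet A k a b).Nonempty := by
  obtain ⟨x, hx, hmax⟩ := Set.exists_max_image {p : ℕ × ℕ | InRange a b p}
    (fun p => A p.1 p.2) (setOf_inRange_finite a b) ⟨(1, a), Or.inl rfl, le_rfl, hab⟩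
  have hnone : {q | InRange a b q ∧ A x.1 x.2 < A q.1 q.2} = ∅ :=
    Set.eq_empty_of_forall_notMem fun y ⟨hy, hlt⟩ => (hmax y hy).not_gt hlt
  exact ⟨x, hx, by rw [hnone, Set.ncard_empty]; omega⟩

lemma mem_topkSet_mono {a' b' : ℕ} (ha : a ≤ a') (hb : b' ≤ b) {x : ℕ × ℕ}
    (hx : x ∈ TopkSet A k a b) (hx' : InRange a' b' x) : x ∈ TopkSet A k a' b' := by
  refine ⟨hx', lt_of_le_of_lt (Set.ncard_le_ncard ?_ ((setOf_inRange_finite a b).subset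
    fun _ hy => hy.1)) hx.2⟩
  rintro y ⟨⟨hrow, hc1, hc2⟩, hlt⟩
  exact ⟨⟨hrow, ha.trans hc1, hc2.trans hb⟩, hlt⟩

lemma bddAbove_topkSet_cols (A : ℕ → ℕ → ℝ) (k a b : ℕ) :
    BddAbove {c | ∃ r, (r, c) ∈ TopkSet A k a b} :=
  ⟨b, fun _ ⟨_, hr⟩ => hr.1.2.2⟩

lemma le_rightCol {x : ℕ × ℕ} (hx : x ∈ TopkSet A k a b) : x.2 ≤ rightCol A k a b :=
  le_csSup (bddAbove_topkSet_cols A k a b) ⟨x.1, hx⟩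

lemma rightCol_le : rightCol A k a b ≤ b :=
  csSup_le' fun _ ⟨_, hr⟩ => hr.1.2.2

lemma exists_mem_rightCol (hk : 1 ≤ k) (hab : a ≤ b) :
    ∃ r, (r, rightCol A k a b) ∈ TopkSet A k a b := by
  obtain ⟨x, hx⟩ := topkSet_nonempty hk hab
  exact Nat.sSup_mem (s := {c | ∃ r, (r, c) ∈ TopkSet A k a b}) ⟨x.2, x.1, hx⟩
    (bddAbove_topkSet_cols A k a b)

lemma leftCol_le {x : ℕ × ℕ} (hx : x ∈ TopkSet A k a b) : leftCol A k a b ≤ x.2 :=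
  Nat.sInf_le ⟨x.1, hx⟩

lemma exists_mem_leftCol (hk : 1 ≤ k) (hab : a ≤ b) :
    ∃ r, (r, leftCol A k a b) ∈ TopkSet A k a b := by
  obtain ⟨x, hx⟩ := topkSet_nonempty hk hab
  exact Nat.sInf_mem (s := {c | ∃ r, (r, c) ∈ TopkSet A k a b}) ⟨x.2, x.1, hx⟩

end TopkSet

lemma ncard_le_two_of_forall_snd_eq {S : Set (ℕ × ℕ)} {c : ℕ}
    (hrow : ∀ x ∈ S, x.1 = 1 ∨ x.1 = 2) (hcol : ∀ x ∈ S, x.2 = c) : S.ncard ≤ 2 := by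
  have hsub : S ⊆ {(1, c), (2, c)} := fun x hx => by
    rcases hrow x hx with h | h <;> simp [Prod.ext_iff, h, hcol x hx]
  calc S.ncard ≤ ({(1, c), (2, c)} : Set (ℕ × ℕ)).ncard := Set.ncard_le_ncard hsub
    _ = 2 := Set.ncard_pair (by simp)

section Dag

variable {A : ℕ → ℕ → ℝ} {k n : ℕ} {p q : ℕ × ℕ}

lemma IsChild.fst_le_snd (hc : IsChild A k q p) : p.1 ≤ p.2 := by
  rcases hc with ⟨-, ⟨rfl, hlt⟩ | ⟨rfl, hlt⟩⟩ <;> dsimp only <;> omega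

lemma IsChild.snd_pos (hc : IsChild A k q p) : 0 < q.2 := by
  rcases hc with ⟨-, ⟨-, hlt⟩ | ⟨-, hlt⟩⟩
  · exact (Nat.zero_le _).trans_lt (hlt.trans_le rightCol_le)
  · exact (Nat.zero_le _).trans_lt hlt

lemma IsNode.fst_le_snd_of_isChild (hq : IsNode A k n q) (hc : IsChild A k q p) : q.1 ≤ q.2 := by
  cases hq with
  | root => exact hc.snd_pos
  | child _ hparent => exact hparent.fst_le_snd

lemma IsChild.exists_column_topkSet_diff (hk : 1 ≤ k) (hq : q.1 ≤ q.2) (hc : IsChild A k q p) :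
    ∃ c, (c = p.1 - 1 ∨ c = p.2 + 1) ∧
      (∃ r, (r, c) ∈ TopkSet A k q.1 q.2 \ TopkSet A k p.1 p.2) ∧
      ∀ x ∈ TopkSet A k q.1 q.2 \ TopkSet A k p.1 p.2, x.2 = c := by
  rcases hc with ⟨-, ⟨rfl, hlt⟩ | ⟨rfl, hlt⟩⟩
  · obtain ⟨r, hr⟩ := exists_mem_rightCol hk hq
    refine ⟨rightCol A k q.1 q.2, Or.inr (by dsimp only; omega), ?_, ?_⟩
    · exact ⟨r, hr, fun h => by have hR := h.1.2.2; dsimp only at hR; omega⟩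
    · rintro x ⟨hxq, hxp⟩
      have hxR := le_rightCol hxq
      have hRq := hr.1.2.2
      by_contra hne
      exact hxp <| mem_topkSet_mono le_rfl (by omega) hxq
        ⟨hxq.1.1, hxq.1.2.1, by dsimp only; omega⟩
  · obtain ⟨r, hr⟩ := exists_mem_leftCol hk hq
    refine ⟨leftCol A k q.1 q.2, Or.inl (by dsimp only; omega), ?_, ?_⟩
    · exact ⟨r, hr, fun h => by have hL := h.1.2.1; dsimp only at hL; omega⟩
    · rintro x ⟨hxq, hxp⟩
      have hLx := leftCol_le hxq
      have hqL := hr.1.2.1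
      by_contra hne
      exact hxp <| mem_topkSet_mono (by omega) le_rfl hxq
        ⟨hxq.1.1, by dsimp only; omega, hxq.1.2.2⟩

end Dag

theorem dag_parent_child_diff_general (A : ℕ → ℕ → ℝ) (n k : ℕ) (hk : 1 ≤ k)
    (p q : ℕ × ℕ) (hq : IsNode A k n q)
    (hchild : IsChild A k q p) :
    1 ≤ (TopkSet A k q.1 q.2 \ TopkSet A k p.1 p.2).ncard ∧
    (TopkSet A k q.1 q.2 \ TopkSet A k p.1 p.2).ncard ≤ 2 ∧
    ∀ x ∈ TopkSet A k q.1 q.2 \ TopkSet A k p.1 p.2,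
      x.2 = p.1 - 1 ∨ x.2 = p.2 + 1 := by
  obtain ⟨c, hc, ⟨r, hr⟩, hcol⟩ :=
    hchild.exists_column_topkSet_diff hk (hq.fst_le_snd_of_isChild hchild)
  have hfin := (topkSet_finite A k q.1 q.2).sdiff (t := TopkSet A k p.1 p.2)
  exact ⟨(Set.ncard_pos hfin).2 ⟨_, hr⟩,
    ncard_le_two_of_forall_snd_eq (fun x hx => hx.1.1.1) hcol,
    fun x hx => hcol x hx ▸ hc⟩

/-- If `p` is a non-leaf node of `D^k_A` with parent `q`, then
`1 ≤ |Top-k(q) \ Top-k(p)| ≤ 2` and every position of `Top-k(q) \ Top-k(p)` lies in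
column `p.1 - 1` or column `p.2 + 1`. -/
theorem dag_parent_child_diff (A : ℕ → ℕ → ℝ) (n k : ℕ) (hn : 1 ≤ n) (hk : 1 ≤ k)
    (hA : DistinctEntries A n) (p q : ℕ × ℕ) (hq : IsNode A k n q)
    (hchild : IsChild A k q p) (hnonleaf : k < 2 * (p.2 - p.1 + 1)) :
    1 ≤ (TopkSet A k q.1 q.2 \ TopkSet A k p.1 p.2).ncard ∧
    (TopkSet A k q.1 q.2 \ TopkSet A k p.1 p.2).ncard ≤ 2 ∧
    ∀ x ∈ TopkSet A k q.1 q.2 \ TopkSet A k p.1 p.2,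
      x.2 = p.1 - 1 ∨ x.2 = p.2 + 1 :=
  dag_parent_child_diff_general A n k hk p q hq hchild
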